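/- The teacher-forcing failure and the snowballing failure are distinct: let V be a nonempty finite type, L ≥ 2, q = (q_1, …, q_L) a next-token predictor, r ∈ V^L a fixed ground-truth response, and α ∈ [0,1]. Suppose q_1(r_1 | empty prefix) = α and q_i(r_i | r_{<i}) = 1 for every i ≥ 2 (the model is perfect on all tokens after the first, given a correct prefix). Then the autoregressive exact-match probability is AG_q(r) = α, and the probability mass that autoregressive generation assigns to sequences whose first token equals r_1 is also α; hence if α > 0, the conditional probability of an exact match given that the first token is correct equals 1. In particular, with α = 1/d the model fails with overall accuracy exactly 1/d while suffering no error accumulation whatsoever after the first token. -/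
import Mathlib

lemma prefix_cons {V : Type*} (n : ℕ) (v : V) (t : Fin n → V) (i : Fin n) :
    (fun j : Fin (i.val + 1) => Fin.cons (α := fun _ => V) v t (Fin.castLE i.succ.2.le j)) =
    Fin.cons (α := fun _ => V) v (fun j : Fin i.val => t (Fin.castLE i.2.le j)) := by
  funext j
  refine Fin.cases ?_ ?_ j
  · simp
  · intro k
    simp [Fin.castLE, Fin.cons, Fin.cases]
    rfl

lemma cons_prod {V : Type*} (n : ℕ)
    (p : (i : Fin (n+1)) → (Fin i.val → V) → V → ℝ) (v : V) (t : Fin n → V) :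
    ∏ i : Fin (n+1), p i (fun j => Fin.cons (α := fun _ => V) v t (Fin.castLE i.2.le j))
        (Fin.cons (α := fun _ => V) v t i)
    = p 0 (fun j => Fin.elim0 j) v *
      ∏ i : Fin n, p i.succ (Fin.cons (α := fun _ => V) v
          (fun j => t (Fin.castLE i.2.le j))) (t i) := by
  rw [Fin.prod_univ_succ]
  congr 1
  · congr 1
    funext j; exact j.elim0
  · apply Finset.prod_congr rfl
    intro i _
    rw [show (fun j => Fin.cons (α := fun _ => V) v t (Fin.castLE (i.succ).2.le j)) =
        Fin.cons (α := fun _ => V) v (fun j : Fin i.val => t (Fin.castLE i.2.le j)) from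
      prefix_cons n v t i]
    congr 1

lemma sum_prod_eq_one {V : Type*} [Fintype V] [DecidableEq V] (n : ℕ)
    (p : (i : Fin n) → (Fin i.val → V) → V → ℝ)
    (hp : ∀ i t, ∑ v : V, p i t v = 1) :
    ∑ s : Fin n → V, ∏ i : Fin n, p i (fun j => s (Fin.castLE i.2.le j)) (s i) = 1 := by
  induction n with
  | zero => simp
  | succ n ih =>
    rw [← (Fin.consEquiv (fun _ : Fin (n+1) => V)).sum_comp]
    rw [Fintype.sum_prod_type]
    simp only [Fin.consEquiv_apply]
    calc (∑ v : V, ∑ t : Fin n → V,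
            ∏ i : Fin (n+1), p i (fun j => Fin.cons (α := fun _ => V) v t (Fin.castLE i.2.le j))
              (Fin.cons (α := fun _ => V) v t i))
        = ∑ v : V, p 0 (fun j => Fin.elim0 j) v := by
          refine Finset.sum_congr rfl fun v _ => ?_
          simp only [cons_prod n p v, ← Finset.mul_sum]
          rw [ih (fun i u w => p i.succ (Fin.cons (α := fun _ => V) v u) w)
            (fun i u => hp _ _), mul_one]
      _ = 1 := hp _ _



/-- teacher-forcing failure vs. snowballing failure: if the next-token
predictor `q` puts probability `α` on the correct first token of `r` and probability `1`
on every later token of `r` given the correct prefix, then the autoregressive exact-match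
probability equals `α`, the autoregressive mass on sequences whose first token is `r 0`
also equals `α`, and (if `α > 0`) the conditional probability of an exact match given a
correct first token equals `1`: the failure is entirely at the first token, with no
error accumulation afterwards. -/
theorem teacher_forcing_failure_without_snowballing
    (V : Type*) [Fintype V] [Nonempty V] [DecidableEq V] (L : ℕ) (hL : 2 ≤ L)
    (q : (i : Fin L) → (Fin i.val → V) → V → ℝ)
    (hq0 : ∀ (i : Fin L) (t : Fin i.val → V) (v : V), 0 ≤ q i t v)
    (hq1 : ∀ (i : Fin L) (t : Fin i.val → V), ∑ v : V, q i t v = 1)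
    (r : Fin L → V) (α : ℝ) (hα0 : 0 ≤ α) (hα1 : α ≤ 1)
    (hfirst : q ⟨0, by omega⟩ (fun j => r (Fin.castLE (by omega) j)) (r ⟨0, by omega⟩) = α)
    (hrest : ∀ i : Fin L, 0 < i.val →
        q i (fun j => r (Fin.castLE i.2.le j)) (r i) = 1) :
    (∏ i : Fin L, q i (fun j => r (Fin.castLE i.2.le j)) (r i)) = α ∧
    (∑ s ∈ Finset.univ.filter (fun s : Fin L → V => s ⟨0, by omega⟩ = r ⟨0, by omega⟩),
        ∏ i : Fin L, q i (fun j => s (Fin.castLE i.2.le j)) (s i)) = α ∧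
    (0 < α →
      (∏ i : Fin L, q i (fun j => r (Fin.castLE i.2.le j)) (r i)) /
        (∑ s ∈ Finset.univ.filter
            (fun s : Fin L → V => s ⟨0, by omega⟩ = r ⟨0, by omega⟩),
          ∏ i : Fin L, q i (fun j => s (Fin.castLE i.2.le j)) (s i)) = 1) := by
  obtain ⟨n, rfl⟩ : ∃ n, L = n + 1 := ⟨L - 1, by omega⟩
  have h0 : (⟨0, by omega⟩ : Fin (n+1)) = 0 := rfl
  have hprod : (∏ i : Fin (n+1), q i (fun j => r (Fin.castLE i.2.le j)) (r i)) = α := by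
    rw [Finset.prod_eq_single (⟨0, by omega⟩ : Fin (n+1))]
    · exact hfirst
    · intro i _ hi
      exact hrest i (by
        rcases Nat.eq_zero_or_pos i.val with h | h
        · exact absurd (Fin.ext h) hi
        · exact h)
    · simp
  have hsum : (∑ s ∈ Finset.univ.filter
        (fun s : Fin (n+1) → V => s ⟨0, by omega⟩ = r ⟨0, by omega⟩),
        ∏ i : Fin (n+1), q i (fun j => s (Fin.castLE i.2.le j)) (s i)) = α := by
    rw [Finset.sum_filter]
    rw [← (Fin.consEquiv (fun _ : Fin (n+1) => V)).sum_comp]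
    rw [Fintype.sum_prod_type]
    simp only [Fin.consEquiv_apply, h0, Fin.cons_zero]
    have step : ∀ v : V,
        (∑ t : Fin n → V, if v = r 0 then
            ∏ i : Fin (n+1), q i (fun j => Fin.cons (α := fun _ => V) v t (Fin.castLE i.2.le j))
              (Fin.cons (α := fun _ => V) v t i) else 0)
        = if v = r 0 then α else 0 := by
      intro v
      by_cases hv : v = r 0
      · simp only [hv, if_true]
        calc (∑ t : Fin n → V,
              ∏ i : Fin (n+1), q i (fun j => Fin.cons (α := fun _ => V) (r 0) t (Fin.castLE i.2.le j))
                (Fin.cons (α := fun _ => V) (r 0) t i))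
            = ∑ t : Fin n → V, q 0 (fun j => Fin.elim0 j) (r 0) *
                ∏ i : Fin n, q i.succ (Fin.cons (α := fun _ => V) (r 0)
                    (fun j => t (Fin.castLE i.2.le j))) (t i) := by
              exact Finset.sum_congr rfl fun t _ => cons_prod n q (r 0) t
          _ = q 0 (fun j => Fin.elim0 j) (r 0) * 1 := by
              rw [← Finset.mul_sum,
                sum_prod_eq_one n (fun i u w => q i.succ (Fin.cons (α := fun _ => V) (r 0) u) w)
                  (fun i u => hq1 _ _)]
          _ = α := by
              rw [mul_one, ← hfirst]
              congr 1
              funext j; exact j.elim0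
      · simp [hv]
    simp only [step]
    simp
  refine ⟨hprod, hsum, fun hα => ?_⟩
  rw [hprod, hsum, div_self (ne_of_gt hα)]
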